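/- For every natural number M ≥ 1 and every complex number x with sinh(x) ≠ 0 and cosh(x) ≠ 0, one has cosh(x)/sinh(x)^{4M+1} = −sinh(x)/cosh(x)^{4M+1} + ∑_{k=0}^{M} 2^{2(M+k)+1} C(M+k, 2k) · cosh(2x)/sinh(2x)^{2(M+k)+1}. -/

import Mathlib

/-!
Write `s = sinh x`, `c = cosh x`. Since `sinh 2x = 2sc` and `cosh 2x = c² + s²`, the sum on
the right is `(c² + s²) (sc)^{-(2M+1)} b_M((sc)⁻²)`, where `b_M(x) = ∑ₖ C(M+k, 2k) xᵏ` is the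
Morgan–Voyce polynomial. After clearing denominators the claim becomes
`c^{4M+2} + s^{4M+2} = (c² + s²) (sc)^{2M} b_M((sc)⁻²)`, the Binet formula for `b_M` at
`u = c²`, `v = s²`; it applies because `(u - v)² = 1 = uv (sc)⁻²`. The Binet formula is
proved jointly with its companion for `B_M(x) = ∑ₖ C(M+k+1, 2k+1) xᵏ`, by induction along the
Pascal recurrences `b_{n+1} = b_n + x B_n` and `B_{n+1} = b_{n+1} + B_n`.
-/

open Finset

namespace MorganVoyce

variable {R : Type*}

def b [CommSemiring R] (n : ℕ) (x : R) : R :=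
  ∑ k ∈ range (n + 1), ((n + k).choose (2 * k) : R) * x ^ k

def B [CommSemiring R] (n : ℕ) (x : R) : R :=
  ∑ k ∈ range (n + 1), ((n + k + 1).choose (2 * k + 1) : R) * x ^ k

section CommSemiring

variable [CommSemiring R] (n : ℕ) (x : R)

theorem b_succ : b (n + 1) x = b n x + x * B n x := by
  have hb : b n x = ∑ k ∈ range (n + 1 + 1), ((n + k).choose (2 * k) : R) * x ^ k := by
    rw [b, sum_range_succ _ (n + 1),
      Nat.choose_eq_zero_of_lt (by omega : n + (n + 1) < 2 * (n + 1))]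
    simp
  have hpascal (k : ℕ) : ((n + 1 + (k + 1)).choose (2 * (k + 1)) : R) * x ^ (k + 1) =
      ((n + (k + 1)).choose (2 * (k + 1)) : R) * x ^ (k + 1) +
        x * (((n + k + 1).choose (2 * k + 1) : R) * x ^ k) := by
    rw [show n + 1 + (k + 1) = n + k + 1 + 1 by ring, show 2 * (k + 1) = 2 * k + 1 + 1 by ring,
      Nat.choose_succ_succ', show n + (k + 1) = n + k + 1 by ring]
    push_cast
    ring
  rw [b, hb, B, sum_range_succ', sum_range_succ' (fun k => ((n + k).choose (2 * k) : R) * x ^ k),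
    mul_sum, sum_congr rfl fun k _ => hpascal k, sum_add_distrib]
  simp only [Nat.choose_zero_right, mul_zero, pow_zero]
  ring

theorem B_succ : B (n + 1) x = b (n + 1) x + B n x := by
  have hB : B n x = ∑ k ∈ range (n + 1 + 1), ((n + k + 1).choose (2 * k + 1) : R) * x ^ k := by
    rw [B, sum_range_succ _ (n + 1),
      Nat.choose_eq_zero_of_lt (by omega : n + (n + 1) + 1 < 2 * (n + 1) + 1)]
    simp
  rw [B, b, hB, ← sum_add_distrib]
  refine sum_congr rfl fun k _ => ?_
  rw [Nat.choose_succ_succ', show n + 1 + k = n + k + 1 by ring]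
  push_cast
  ring

end CommSemiring

/-- Binet formulas: the hypothesis says `x + 2 = t + t⁻¹` for `t = u / v`, without dividing. -/
theorem binet [CommRing R] {u v x : R} (h : u * v * x = (u - v) ^ 2) (n : ℕ) :
    (u + v) * (u * v) ^ n * b n x = u ^ (2 * n + 1) + v ^ (2 * n + 1) ∧
      (u ^ 2 - v ^ 2) * (u * v) ^ n * B n x = u ^ (2 * n + 2) - v ^ (2 * n + 2) := by
  induction n with
  | zero => simp [b, B]
  | succ n ih =>
    obtain ⟨hb, hB⟩ := ih
    have hb' : (u + v) * (u * v) ^ (n + 1) * b (n + 1) x =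
        u ^ (2 * (n + 1) + 1) + v ^ (2 * (n + 1) + 1) := by
      rw [b_succ]
      linear_combination u * v * hb + (u - v) * hB + (u + v) * (u * v) ^ n * B n x * h
    refine ⟨hb', ?_⟩
    rw [B_succ]
    linear_combination (u - v) * hb' + u * v * hB

end MorganVoyce

theorem stmt_9 (M : ℕ) (x : ℂ) (hs : Complex.sinh x ≠ 0)
    (hc : Complex.cosh x ≠ 0) :
    Complex.cosh x / Complex.sinh x ^ (4 * M + 1)
    = -(Complex.sinh x / Complex.cosh x ^ (4 * M + 1)) +
      ∑ k ∈ Finset.range (M + 1),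
        2 ^ (2 * (M + k) + 1) * ((M + k).choose (2 * k)) *
          (Complex.cosh (2 * x) / Complex.sinh (2 * x) ^ (2 * (M + k) + 1)) := by
  set s := Complex.sinh x
  set c := Complex.cosh x
  have hterm (k : ℕ) : (2 : ℂ) ^ (2 * (M + k) + 1) * ((M + k).choose (2 * k)) *
      (Complex.cosh (2 * x) / Complex.sinh (2 * x) ^ (2 * (M + k) + 1)) =
      ((M + k).choose (2 * k) : ℂ) * ((s * c)⁻¹ ^ 2) ^ k *
        ((c ^ 2 + s ^ 2) * (s * c)⁻¹ ^ (2 * M + 1)) := by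
    rw [Complex.sinh_two_mul, Complex.cosh_two_mul, mul_assoc 2, mul_pow]
    field_simp
    ring
  have hx : c ^ 2 * s ^ 2 * (s * c)⁻¹ ^ 2 = (c ^ 2 - s ^ 2) ^ 2 := by
    rw [Complex.cosh_sq_sub_sinh_sq, one_pow]
    field_simp
  have hbinet := (MorganVoyce.binet hx M).1
  rw [sum_congr rfl fun k _ => hterm k, ← sum_mul, ← MorganVoyce.b]
  generalize MorganVoyce.b M ((s * c)⁻¹ ^ 2) = β at hbinet ⊢
  rw [← pow_mul, ← pow_mul, show (c ^ 2 * s ^ 2) ^ M = (s * c) ^ (2 * M) by ring] at hbinet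
  calc c / s ^ (4 * M + 1)
      = -(s / c ^ (4 * M + 1)) + (c ^ (2 * (2 * M + 1)) + s ^ (2 * (2 * M + 1))) /
          (s * c) ^ (4 * M + 1) := by
        field_simp
        ring
    _ = -(s / c ^ (4 * M + 1)) + β * ((c ^ 2 + s ^ 2) * (s * c)⁻¹ ^ (2 * M + 1)) := by
        rw [← hbinet, show 4 * M + 1 = 2 * M + (2 * M + 1) by ring, pow_add (s * c), inv_pow]
        field_simp
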